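/- arXiv:1608.02636 — 7 statements merged into one kernel-verified Lean document; each statement's English description precedes it below -/
import Mathlib

section
/- Let X be a countable set equipped with a quasi-ordering ≤ (a reflexive and transitive relation). Then X contains no infinite antichain under ≤ if, and only if, every downward closed subset of X is equal to a finite (possibly empty) union of ideals of X. -/
namespace ETproof

variable {X : Type*} (le : X → X → Prop)

/-- Ideal of a down-set `D`. -/
def IsIdl (D I : Set X) : Prop :=
  I ⊆ D ∧ I.Nonempty ∧ (∀ x a, le x a → a ∈ I → x ∈ I) ∧
    ∀ a ∈ I, ∀ b ∈ I, ∃ c ∈ I, le a c ∧ le b c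

/-- No infinite antichain kills pairwise incomparable sequences. -/
theorem no_seq (hrefl : ∀ x, le x x)
    (FAC : ∀ A : Set X, (∀ a ∈ A, ∀ b ∈ A, a ≠ b → ¬ le a b ∧ ¬ le b a) → A.Finite)
    (u : ℕ → X) (h : ∀ i j, i < j → ¬ le (u i) (u j) ∧ ¬ le (u j) (u i)) : False := by
  have hinj : Function.Injective u := by
    intro i j hij
    by_contra hne
    rcases Nat.lt_or_ge i j with hlt | hge
    · exact (h i j hlt).1 (hij ▸ hrefl (u i))
    · exact (h j i (lt_of_le_of_ne hge (Ne.symm hne))).1 (hij ▸ hrefl (u j))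
  have hinf : (Set.range u).Infinite := Set.infinite_range_of_injective hinj
  have hfin : (Set.range u).Finite := by
    apply FAC
    rintro a ⟨i, rfl⟩ b ⟨j, rfl⟩ hab
    have hij : i ≠ j := fun hh => hab (by rw [hh])
    rcases Nat.lt_or_ge i j with hlt | hge
    · exact h i j hlt
    · exact (h j i (lt_of_le_of_ne hge (Ne.symm hij))).symm
  exact hinf hfin

/-- Zorn: maximal ideal containing a given point of a down-set. -/
theorem maximal_ideal (hrefl : ∀ x, le x x)
    (htrans : ∀ x y z, le x y → le y z → le x z)
    (D : Set X) (hD : ∀ x a, le x a → a ∈ D → x ∈ D) {e : X} (he : e ∈ D) :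
    ∃ I, IsIdl le D I ∧ e ∈ I ∧ ∀ J, IsIdl le D J → I ⊆ J → J ⊆ I := by
  set S : Set (Set X) := {I | IsIdl le D I ∧ e ∈ I} with hS
  have hchain : ∀ c ⊆ S, IsChain (· ⊆ ·) c → c.Nonempty →
      ∃ ub ∈ S, ∀ s ∈ c, s ⊆ ub := by
    intro c hcS hc ⟨s₀, hs₀⟩
    refine ⟨⋃₀ c, ⟨⟨?_, ?_, ?_, ?_⟩, ?_⟩, fun s hs => Set.subset_sUnion_of_mem hs⟩
    · rintro x ⟨s, hs, hx⟩; exact (hcS hs).1.1 hx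
    · exact ⟨e, s₀, hs₀, (hcS hs₀).2⟩
    · rintro x a hxa ⟨s, hs, ha⟩; exact ⟨s, hs, (hcS hs).1.2.2.1 x a hxa ha⟩
    · rintro a ⟨s, hs, has⟩ b ⟨t, ht, hbt⟩
      rcases hc.total hs ht with hst | hts
      · obtain ⟨cc, hcc, h1, h2⟩ := (hcS ht).1.2.2.2 a (hst has) b hbt
        exact ⟨cc, ⟨t, ht, hcc⟩, h1, h2⟩
      · obtain ⟨cc, hcc, h1, h2⟩ := (hcS hs).1.2.2.2 a has b (hts hbt)
        exact ⟨cc, ⟨s, hs, hcc⟩, h1, h2⟩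
    · exact ⟨s₀, hs₀, (hcS hs₀).2⟩
  have hmem : {x | le x e} ∈ S := by
    refine ⟨⟨fun x hx => hD x e hx he, ⟨e, hrefl e⟩, ?_, ?_⟩, hrefl e⟩
    · intro x a hxa ha; exact htrans x a e hxa ha
    · intro a ha b hb; exact ⟨e, hrefl e, ha, hb⟩
  obtain ⟨m, _, hmS, hmax⟩ := zorn_subset_nonempty S hchain _ hmem
  exact ⟨m, hmS.1, hmS.2, fun J hJ hIJ => hmax ⟨hJ, hIJ hmS.2⟩ hIJ⟩

/-- In a countable nonempty directed set there is an increasing cofinal sequence. -/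
theorem cofinal_seq [Countable X] (hrefl : ∀ x, le x x)
    (htrans : ∀ x y z, le x y → le y z → le x z)
    (I : Set X) (hne : I.Nonempty)
    (hdir : ∀ a ∈ I, ∀ b ∈ I, ∃ c ∈ I, le a c ∧ le b c) :
    ∃ b : ℕ → X, (∀ n, b n ∈ I) ∧ (∀ k m, k ≤ m → le (b k) (b m)) ∧
      (∀ c ∈ I, ∃ n, le c (b n)) := by
  obtain ⟨f, hf⟩ := (Set.to_countable I).exists_eq_range hne
  have hfI : ∀ n, f n ∈ I := fun n => hf ▸ Set.mem_range_self n
  have step : ∀ n (p : {x // x ∈ I}), ∃ c ∈ I, le p.1 c ∧ le (f (n+1)) c :=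
    fun n p => hdir p.1 p.2 (f (n+1)) (hfI (n+1))
  let B : ℕ → {x // x ∈ I} := fun n =>
    Nat.rec (⟨f 0, hfI 0⟩) (fun n p => ⟨(step n p).choose, (step n p).choose_spec.1⟩) n
  have hBsucc : ∀ n, le (B n).1 (B (n+1)).1 ∧ le (f (n+1)) (B (n+1)).1 := by
    intro n
    exact ⟨(step n (B n)).choose_spec.2.1, (step n (B n)).choose_spec.2.2⟩
  refine ⟨fun n => (B n).1, fun n => (B n).2, ?_, ?_⟩
  · intro k m hkm
    induction m with
    | zero => rw [Nat.le_zero.mp hkm]; exact hrefl _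
    | succ m ih =>
      rcases Nat.lt_or_ge k (m+1) with hlt | hge
      · exact htrans _ _ _ (ih (Nat.lt_succ_iff.mp hlt)) (hBsucc m).1
      · rw [Nat.le_antisymm hkm hge]; exact hrefl _
  · intro c hc
    rw [hf] at hc
    obtain ⟨n, rfl⟩ := hc
    cases n with
    | zero => exact ⟨0, hrefl _⟩
    | succ n => exact ⟨n+1, (hBsucc n).2⟩

/-- Key lemma: if `I` is a maximal ideal of the down-set `D` and `x ∈ D \ I`, then
some element of `I` has no common upper bound with `x` inside `D`. -/
theorem key [Countable X] (hrefl : ∀ x, le x x)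
    (htrans : ∀ x y z, le x y → le y z → le x z)
    (FAC : ∀ A : Set X, (∀ a ∈ A, ∀ b ∈ A, a ≠ b → ¬ le a b ∧ ¬ le b a) → A.Finite)
    (D : Set X) (hD : ∀ x a, le x a → a ∈ D → x ∈ D)
    (I : Set X) (hI : IsIdl le D I)
    (hmax : ∀ J, IsIdl le D J → I ⊆ J → J ⊆ I)
    (x : X) (hxD : x ∈ D) (hxI : x ∉ I) :
    ∃ a ∈ I, ∀ z ∈ D, ¬ (le a z ∧ le x z) := by
  clear hxD
  by_contra hcon
  push_neg at hcon
  obtain ⟨b, hbI, hbmono, hbcof⟩ := cofinal_seq le hrefl htrans I hI.2.1 hI.2.2.2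
  have hz : ∀ n, ∃ z, z ∈ D ∧ le (b n) z ∧ le x z := by
    intro n
    obtain ⟨z, hz1, hz2, hz3⟩ := hcon (b n) (hbI n)
    exact ⟨z, hz1, hz2, hz3⟩
  choose z hzD hzb hzx using hz
  haveI : IsTrans X le := ⟨fun a b c => htrans a b c⟩
  obtain ⟨g, hg⟩ := exists_increasing_or_nonincreasing_subseq le z
  rcases hg with hasc | hnot
  · -- ascending subsequence: extend the ideal, contradiction with maximality
    set J : Set X := {y | ∃ n, le y (z (g n))} with hJ
    have hJIdl : IsIdl le D J := by
      refine ⟨?_, ⟨x, 0, hzx (g 0)⟩, ?_, ?_⟩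
      · rintro y ⟨n, hy⟩; exact hD y _ hy (hzD _)
      · rintro y a hya ⟨n, ha⟩; exact ⟨n, htrans _ _ _ hya ha⟩
      · rintro a ⟨n1, ha⟩ b ⟨n2, hb⟩
        refine ⟨z (g (max n1 n2)), ⟨max n1 n2, hrefl _⟩, ?_, ?_⟩
        · rcases Nat.lt_or_ge n1 (max n1 n2) with hlt | hge
          · exact htrans _ _ _ ha (hasc n1 _ hlt)
          · rw [Nat.le_antisymm (le_max_left n1 n2) hge] at ha; exact ha
        · rcases Nat.lt_or_ge n2 (max n1 n2) with hlt | hge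
          · exact htrans _ _ _ hb (hasc n2 _ hlt)
          · rw [Nat.le_antisymm (le_max_right n1 n2) hge] at hb; exact hb
    have hIJ : I ⊆ J := by
      intro a ha
      obtain ⟨k, hk⟩ := hbcof a ha
      exact ⟨k, htrans _ _ _ hk (htrans _ _ _ (hbmono k (g k) g.strictMono.le_apply) (hzb (g k)))⟩
    exact hxI (hmax J hJIdl hIJ ⟨0, hzx (g 0)⟩)
  · -- no increasing pair; split again by the reversed relation
    haveI : IsTrans X (fun a b => le b a) := ⟨fun a b c h1 h2 => htrans c b a h2 h1⟩
    obtain ⟨g2, hg2⟩ := exists_increasing_or_nonincreasing_subseq (fun a b => le b a)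
      (fun n => z (g n))
    rcases hg2 with hdesc | hnot2
    · -- descending: single upper bound dominates I, contradiction with maximality
      set t : X := z (g (g2 0)) with ht
      have hJIdl : IsIdl le D {y | le y t} := by
        refine ⟨fun y hy => hD y t hy (hzD _), ⟨t, hrefl t⟩, ?_, ?_⟩
        · intro y a hya ha; exact htrans _ _ _ hya ha
        · intro a ha b hb; exact ⟨t, hrefl t, ha, hb⟩
      have hIJ : I ⊆ {y | le y t} := by
        intro a ha
        obtain ⟨k, hk⟩ := hbcof a ha
        have h1 : le (b k) (b (g (g2 (k+1)))) := by
          refine hbmono k _ ?_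
          exact le_trans (Nat.le_succ k) (le_trans g2.strictMono.le_apply g.strictMono.le_apply)
        have h2 : le (z (g (g2 (k+1)))) t := hdesc 0 (k+1) (Nat.succ_pos k)
        exact htrans _ _ _ hk (htrans _ _ _ h1 (htrans _ _ _ (hzb _) h2))
      exact hxI (hmax _ hJIdl hIJ (hzx (g (g2 0))))
    · -- pairwise incomparable: infinite antichain
      exact no_seq le hrefl FAC (fun n => z (g (g2 n)))
        (fun i j hij => ⟨hnot (g2 i) (g2 j) (g2.strictMono hij), hnot2 i j hij⟩)

/-- The hard (forward) direction. -/
theorem forward [Countable X] (hrefl : ∀ x, le x x)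
    (htrans : ∀ x y z, le x y → le y z → le x z)
    (FAC : ∀ A : Set X, (∀ a ∈ A, ∀ b ∈ A, a ≠ b → ¬ le a b ∧ ¬ le b a) → A.Finite)
    (D : Set X) (hDC : ∀ x a, le x a → a ∈ D → x ∈ D) :
    ∃ (n : ℕ) (I : Fin n → Set X),
      (∀ k, (I k).Nonempty ∧
        (∀ x a, le x a → a ∈ I k → x ∈ I k) ∧
        (∀ a ∈ I k, ∀ b ∈ I k, ∃ c ∈ I k, le a c ∧ le b c)) ∧
      D = ⋃ k, I k := by
  classical
  by_contra hbad
  set Proper : X × Set X → Prop :=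
    fun p => p.1 ∈ D ∧ p.1 ∈ p.2 ∧ IsIdl le D p.2 ∧
      ∀ J, IsIdl le D J → p.2 ⊆ J → J ⊆ p.2 with hProperDef
  have hstep : ∀ L : List (X × Set X), (∀ p ∈ L, Proper p) →
      ∃ q, Proper q ∧ ∀ p ∈ L, q.1 ∉ p.2 := by
    intro L hL
    have hex : ∃ e ∈ D, ∀ p ∈ L, e ∉ p.2 := by
      by_contra hne
      push_neg at hne
      apply hbad
      refine ⟨L.length, fun k => (L.get k).2, fun k => ?_, ?_⟩
      · have hk := hL _ (L.get_mem k)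
        exact ⟨⟨_, hk.2.1⟩, hk.2.2.1.2.2.1, hk.2.2.1.2.2.2⟩
      · apply Set.Subset.antisymm
        · intro x hx
          obtain ⟨p, hpL, hpx⟩ := hne x hx
          obtain ⟨k, hk⟩ := List.mem_iff_get.mp hpL
          exact Set.mem_iUnion.mpr ⟨k, by rw [hk]; exact hpx⟩
        · intro x hx
          obtain ⟨k, hk⟩ := Set.mem_iUnion.mp hx
          exact (hL _ (L.get_mem k)).2.2.1.1 hk
    obtain ⟨e, heD, hfresh⟩ := hex
    obtain ⟨I, hIdl, heI, hmax⟩ := maximal_ideal le hrefl htrans D hDC heD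
    exact ⟨(e, I), ⟨heD, heI, hIdl, hmax⟩, hfresh⟩
  have hXne : Nonempty X := by
    obtain ⟨q, -, -⟩ := hstep [] (by intro p hp; exact absurd hp List.not_mem_nil)
    exact ⟨q.1⟩
  let pick : List (X × Set X) → X × Set X := fun L =>
    if h : ∀ p ∈ L, Proper p then (hstep L h).choose else Classical.arbitrary _
  let state : ℕ → List (X × Set X) := fun n => Nat.rec [] (fun _ L => L ++ [pick L]) n
  have hstate_succ : ∀ n, state (n+1) = state n ++ [pick (state n)] := fun n => rfl
  have hProper : ∀ n, ∀ p ∈ state n, Proper p := by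
    intro n
    induction n with
    | zero => intro p hp; exact absurd hp List.not_mem_nil
    | succ n ih =>
      intro p hp
      rw [hstate_succ] at hp
      rcases List.mem_append.mp hp with h | h
      · exact ih p h
      · have hpe : p = pick (state n) := List.mem_singleton.mp h
        have hpick : pick (state n) = (hstep (state n) ih).choose := dif_pos ih
        rw [hpe, hpick]
        exact (hstep (state n) ih).choose_spec.1
  have hpick_eq : ∀ n, pick (state n) = (hstep (state n) (hProper n)).choose :=
    fun n => dif_pos (hProper n)
  set E : ℕ → X := fun n => (pick (state n)).1 with hE
  set II : ℕ → Set X := fun n => (pick (state n)).2 with hII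
  have hPn : ∀ n, Proper (E n, II n) := fun n => hProper (n+1) _
    (by rw [hstate_succ]; exact List.mem_append_right _ (List.mem_singleton.mpr rfl))
  have hmemst : ∀ j n, j < n → (pick (state j)) ∈ state n := by
    intro j n hjn
    induction n with
    | zero => exact absurd hjn (Nat.not_lt_zero j)
    | succ n ih =>
      rw [hstate_succ]
      rcases Nat.lt_or_ge j n with h | h
      · exact List.mem_append_left _ (ih h)
      · have : j = n := Nat.le_antisymm (Nat.lt_succ_iff.mp hjn) h
        rw [this]
        exact List.mem_append_right _ (List.mem_singleton.mpr rfl)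
  have hfresh : ∀ j n, j < n → E n ∉ II j := by
    intro j n hjn
    have h1 := (hstep (state n) (hProper n)).choose_spec.2 _ (hmemst j n hjn)
    rw [← hpick_eq n] at h1
    exact h1
  -- properties of the pairs
  have hED : ∀ n, E n ∈ D := fun n => (hPn n).1
  have hEI : ∀ n, E n ∈ II n := fun n => (hPn n).2.1
  have hIdl : ∀ n, IsIdl le D (II n) := fun n => (hPn n).2.2.1
  have hmax : ∀ n, ∀ J, IsIdl le D J → II n ⊆ J → J ⊆ II n := fun n => (hPn n).2.2.2
  haveI : IsTrans X le := ⟨fun a b c => htrans a b c⟩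
  obtain ⟨g, hg⟩ := exists_increasing_or_nonincreasing_subseq le E
  rcases hg with hasc | hnot
  · -- ascending case: use the key lemma to build pairwise incompatible elements
    have hkey : ∀ i, ∃ a ∈ II (g i), ∀ z ∈ D, ¬(le a z ∧ le (E (g (i+1))) z) := by
      intro i
      exact key le hrefl htrans FAC D hDC _ (hIdl (g i)) (hmax (g i)) _
        (hED (g (i+1))) (hfresh (g i) (g (i+1)) (g.strictMono (Nat.lt_succ_self i)))
    choose a haI hainc using hkey
    have hu : ∀ i, ∃ c ∈ II (g i), le (E (g i)) c ∧ le (a i) c :=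
      fun i => (hIdl (g i)).2.2.2 _ (hEI (g i)) _ (haI i)
    choose u huI hux hua using hu
    have hxle : ∀ i j, i < j → le (E (g (i+1))) (u j) := by
      intro i j hij
      have hx : le (E (g (i+1))) (E (g j)) := by
        rcases Nat.lt_or_ge (i+1) j with hlt | hge
        · exact hasc (i+1) j hlt
        · have heq : i+1 = j := Nat.le_antisymm hij hge
          rw [heq]; exact hrefl _
      exact htrans _ _ _ hx (hux j)
    apply no_seq le hrefl FAC u
    intro i j hij
    constructor
    · intro hle
      have hzD : u j ∈ D := (hIdl (g j)).1 (huI j)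
      exact hainc i _ hzD ⟨htrans _ _ _ (hua i) hle, hxle i j hij⟩
    · intro hle
      have hzD : u i ∈ D := (hIdl (g i)).1 (huI i)
      exact hainc i _ hzD ⟨hua i, htrans _ _ _ (hxle i j hij) hle⟩
  · -- incomparable case: infinite antichain directly
    apply no_seq le hrefl FAC (fun n => E (g n))
    intro i j hij
    refine ⟨hnot i j hij, fun hle => ?_⟩
    exact hfresh (g i) (g j) (g.strictMono hij)
      ((hIdl (g i)).2.2.1 _ _ hle (hEI (g i)))

end ETproof

/-- For a countable quasi-ordered set `X`, there is no infinite
antichain if and only if every downward closed subset of `X` is a finite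
(possibly empty) union of ideals. -/
theorem stmt_0 {X : Type*} [Countable X] (le : X → X → Prop)
    (hrefl : ∀ x, le x x)
    (htrans : ∀ x y z, le x y → le y z → le x z) :
    (∀ A : Set X, (∀ a ∈ A, ∀ b ∈ A, a ≠ b → ¬ le a b ∧ ¬ le b a) → A.Finite)
    ↔
    (∀ D : Set X, (∀ x a, le x a → a ∈ D → x ∈ D) →
      ∃ (n : ℕ) (I : Fin n → Set X),
        (∀ k, (I k).Nonempty ∧
          (∀ x a, le x a → a ∈ I k → x ∈ I k) ∧
          (∀ a ∈ I k, ∀ b ∈ I k, ∃ c ∈ I k, le a c ∧ le b c)) ∧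
        D = ⋃ k, I k) := by
  constructor
  · intro FAC D hDC
    exact ETproof.forward le hrefl htrans FAC D hDC
  · intro hdecomp A hA
    classical
    set D : Set X := {x | ∃ a ∈ A, le x a} with hD
    have hDC : ∀ x a, le x a → a ∈ D → x ∈ D := by
      rintro x a hxa ⟨b, hb, hab⟩
      exact ⟨b, hb, htrans x a b hxa hab⟩
    obtain ⟨n, I, hIdl, hDeq⟩ := hdecomp D hDC
    have hmem : ∀ a : A, ∃ k : Fin n, (a : X) ∈ I k := by
      rintro ⟨a, ha⟩
      have : a ∈ D := ⟨a, ha, hrefl a⟩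
      rw [hDeq] at this
      exact Set.mem_iUnion.mp this
    choose f hf using hmem
    have hinj : Function.Injective f := by
      rintro ⟨p, hp⟩ ⟨q, hq⟩ hpq
      obtain ⟨c, hcI, hpc, hqc⟩ := (hIdl (f ⟨p, hp⟩)).2.2 p (hf ⟨p, hp⟩) q (hpq ▸ hf ⟨q, hq⟩)
      have hcD : c ∈ D := by
        rw [hDeq]; exact Set.mem_iUnion.mpr ⟨_, hcI⟩
      obtain ⟨a', ha', hca'⟩ := hcD
      have hpa' : le p a' := htrans p c a' hpc hca'
      have hqa' : le q a' := htrans q c a' hqc hca'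
      have hp' : p = a' := by
        by_contra hne
        exact (hA p hp a' ha' hne).1 hpa'
      have hq' : q = a' := by
        by_contra hne
        exact (hA q hq a' ha' hne).1 hqa'
      exact Subtype.ext (hp'.trans hq'.symm)
    haveI : Finite A := Finite.of_injective f hinj
    exact A.toFinite
end

section
/- Let X be a countable set quasi-ordered by ≤ with no infinite antichain, and let D ⊆ X be downward closed. Then there exists a subset D' ⊆ D such that D' is well-quasi-ordered by the restriction of ≤ (every infinite sequence of elements of D' contains indices i < j with the i-th element ≤ the j-th element) and D = ↓D', i.e., D is the downward closure of D' in X. -/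
/-!
Enumerate `X` injectively by `e : X → ℕ` and keep those `x ∈ D` whose code `e x` is least among
all their upper bounds in `D`. Every element of `D` lies below such a point: move to an upper
bound of smaller code until none exists. On the kept points `e` is strictly monotone, so they
carry no infinite strictly descending chain; together with the absence of infinite antichains
this makes them well-quasi-ordered.
-/

open Set Function

namespace Set

variable {α : Type*} [Preorder α]

theorem IsPWO.of_wellFoundedLT {s : Set α} [WellFoundedLT s]
    (hac : ∀ t ⊆ s, IsAntichain (· ≤ ·) t → t.Finite) : s.IsPWO := by
  have : WellQuasiOrderedLE s := wellQuasiOrderedLE_iff.2 ⟨‹_›, fun t ht =>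
    Finite.of_finite_image (hac _ (image_subset_iff.2 fun x _ => x.2) (ht.image _ fun _ _ h => h))
      Subtype.val_injective.injOn⟩
  exact this.wqo

def rankMinimalPoints (e : α → ℕ) (D : Set α) : Set α :=
  {x | x ∈ D ∧ ∀ y ∈ D, x ≤ y → e x ≤ e y}

variable (e : α → ℕ) (D : Set α)

theorem rankMinimalPoints_subset : rankMinimalPoints e D ⊆ D := fun _ hx => hx.1

theorem exists_le_mem_rankMinimalPoints {x : α} (hx : x ∈ D) :
    ∃ d ∈ rankMinimalPoints e D, x ≤ d := by
  induction hn : e x using Nat.strong_induction_on generalizing x with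
  | _ n ih =>
    by_cases hmin : x ∈ rankMinimalPoints e D
    · exact ⟨x, hmin, le_rfl⟩
    · obtain ⟨y, hyD, hxy, hlt⟩ : ∃ y ∈ D, x ≤ y ∧ e y < e x := by
        simpa [rankMinimalPoints, hx] using hmin
      obtain ⟨d, hd, hyd⟩ := ih (e y) (hn ▸ hlt) hyD rfl
      exact ⟨d, hd, hxy.trans hyd⟩

variable {e}

theorem strictMono_rankMinimalPoints (he : Injective e) :
    StrictMono fun x : rankMinimalPoints e D => e x :=
  fun x y hxy => (x.2.2 y y.2.1 hxy.le).lt_of_ne fun h => hxy.ne (Subtype.ext (he h))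

theorem isPWO_rankMinimalPoints (he : Injective e)
    (hac : ∀ A : Set α, IsAntichain (· ≤ ·) A → A.Finite) : (rankMinimalPoints e D).IsPWO :=
  have := (strictMono_rankMinimalPoints D he).wellFoundedLT
  IsPWO.of_wellFoundedLT fun t _ => hac t

end Set

/-- In a countable quasi-ordered set with no infinite antichain,
every downward closed set `D` is the downward closure of some subset
`D' ⊆ D` that is well-quasi-ordered by the restriction of `≤`. -/
theorem stmt_1 {X : Type*} [Countable X] (le : X → X → Prop)
    (hrefl : ∀ x, le x x)
    (htrans : ∀ x y z, le x y → le y z → le x z)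
    (hac : ∀ A : Set X, (∀ a ∈ A, ∀ b ∈ A, a ≠ b → ¬ le a b ∧ ¬ le b a) → A.Finite)
    (D : Set X) (hD : ∀ x a, le x a → a ∈ D → x ∈ D) :
    ∃ D' ⊆ D,
      (∀ f : ℕ → X, (∀ n, f n ∈ D') → ∃ i j, i < j ∧ le (f i) (f j)) ∧
      D = {x | ∃ d ∈ D', le x d} := by
  let _ : Preorder X := { le := le, le_refl := hrefl, le_trans := htrans }
  obtain ⟨e, he⟩ := Countable.exists_injective_nat X
  have hac' : ∀ A : Set X, IsAntichain (· ≤ ·) A → A.Finite := fun A hA =>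
    hac A fun a ha b hb hab => ⟨hA ha hb hab, hA hb ha hab.symm⟩
  refine ⟨rankMinimalPoints e D, rankMinimalPoints_subset e D,
    fun f hf => (isPWO_rankMinimalPoints D he hac').exists_lt hf, ?_⟩
  ext x
  exact ⟨exists_le_mem_rankMinimalPoints e D, fun ⟨d, hd, hxd⟩ => hD x d hxd hd.1⟩
end

section
/- Let (X, →) be a transition system, let ≤ be a quasi-ordering on X that is monotone with respect to →, and let x, y ∈ X. Then y is NOT coverable from x (i.e., there is no y' with y ≤ y' and x →* y') if, and only if, there exists a downward closed set D ⊆ X such that ↓Post(D) ⊆ D, x ∈ D and y ∉ D. -/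
/-- Downward closure of a set under a quasi-ordering. -/
def downcl {X : Type*} (le : X → X → Prop) (A : Set X) : Set X :=
  {x | ∃ a ∈ A, le x a}

/-- Immediate successors of a set of states. -/
def post {X : Type*} (step : X → X → Prop) (A : Set X) : Set X :=
  {y | ∃ x ∈ A, step x y}

/-!
If `y` is not coverable from `x`, the set of all states from which `y` is not coverable is
the required invariant: monotonicity makes it downward closed and closed under `↓Post`.
Conversely, an invariant containing `x` contains every state reachable from `x`, and being
downward closed it then contains `y` as soon as some reachable state lies above `y`.
-/

open Relation

section MonotoneTransitionSystem

variable {X : Type*} {step le : X → X → Prop}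

def Coverable (step le : X → X → Prop) (x y : X) : Prop :=
  ∃ y', le y y' ∧ ReflTransGen step x y'

theorem exists_le_reflTransGen_of_le
    (hmono : ∀ x y x', step x y → le x x' → ∃ y', le y y' ∧ ReflTransGen step x' y')
    {z w a : X} (h : ReflTransGen step z w) (hle : le z a) :
    ∃ w', le w w' ∧ ReflTransGen step a w' := by
  induction h with
  | refl => exact ⟨a, hle, .refl⟩
  | tail _ hcw ih =>
    obtain ⟨c', hcc', hac'⟩ := ih
    obtain ⟨w', hww', hc'w'⟩ := hmono _ _ _ hcw hcc'
    exact ⟨w', hww', hac'.trans hc'w'⟩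

theorem Coverable.refl (hrefl : ∀ x, le x x) (y : X) : Coverable step le y y :=
  ⟨y, hrefl y, .refl⟩

theorem Coverable.of_le (htrans : ∀ x y z, le x y → le y z → le x z)
    (hmono : ∀ x y x', step x y → le x x' → ∃ y', le y y' ∧ ReflTransGen step x' y')
    {z a y : X} (hza : le z a) (h : Coverable step le z y) : Coverable step le a y := by
  obtain ⟨y', hyy', hzy'⟩ := h
  obtain ⟨y'', hy'y'', hay''⟩ := exists_le_reflTransGen_of_le hmono hzy' hza
  exact ⟨y'', htrans _ _ _ hyy' hy'y'', hay''⟩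

theorem Coverable.head {z w y : X} (hzw : step z w) (h : Coverable step le w y) :
    Coverable step le z y :=
  let ⟨y', hyy', hwy'⟩ := h
  ⟨y', hyy', .head hzw hwy'⟩

theorem downcl_setOf_not_coverable (hrefl : ∀ x, le x x)
    (htrans : ∀ x y z, le x y → le y z → le x z)
    (hmono : ∀ x y x', step x y → le x x' → ∃ y', le y y' ∧ ReflTransGen step x' y')
    (y : X) :
    downcl le {z | ¬ Coverable step le z y} = {z | ¬ Coverable step le z y} := by
  ext z
  constructor
  · rintro ⟨a, ha, hza⟩ hz
    exact ha (hz.of_le htrans hmono hza)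
  · exact fun hz => ⟨z, hz, hrefl z⟩

theorem downcl_post_setOf_not_coverable_subset
    (htrans : ∀ x y z, le x y → le y z → le x z)
    (hmono : ∀ x y x', step x y → le x x' → ∃ y', le y y' ∧ ReflTransGen step x' y')
    (y : X) :
    downcl le (post step {z | ¬ Coverable step le z y}) ⊆ {z | ¬ Coverable step le z y} := by
  rintro w ⟨b, ⟨d, hd, hdb⟩, hwb⟩ hw
  exact hd ((hw.of_le htrans hmono hwb).head hdb)

theorem mem_of_reflTransGen_of_downcl_post_subset (hrefl : ∀ x, le x x) {D : Set X}
    (hinv : downcl le (post step D) ⊆ D) {x z : X} (hx : x ∈ D) (h : ReflTransGen step x z) :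
    z ∈ D := by
  induction h with
  | refl => exact hx
  | tail _ hcz ih => exact hinv ⟨_, ⟨_, ih, hcz⟩, hrefl _⟩

theorem not_coverable_of_downcl_post_subset (hrefl : ∀ x, le x x) {D : Set X}
    (hdc : D = downcl le D) (hinv : downcl le (post step D) ⊆ D) {x y : X}
    (hx : x ∈ D) (hy : y ∉ D) : ¬ Coverable step le x y := by
  rintro ⟨y', hyy', hxy'⟩
  rw [hdc] at hy
  exact hy ⟨y', mem_of_reflTransGen_of_downcl_post_subset hrefl hinv hx hxy', hyy'⟩

end MonotoneTransitionSystem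

/-- In a monotone quasi-ordered transition system, `y` is not
coverable from `x` iff there is a downward closed inductive invariant `D`
with `↓Post(D) ⊆ D`, `x ∈ D` and `y ∉ D`. -/
theorem stmt_4 {X : Type*} (step le : X → X → Prop)
    (hrefl : ∀ x, le x x)
    (htrans : ∀ x y z, le x y → le y z → le x z)
    (hmono : ∀ x y x', step x y → le x x' →
      ∃ y', le y y' ∧ Relation.ReflTransGen step x' y')
    (x y : X) :
    (¬ ∃ y', le y y' ∧ Relation.ReflTransGen step x y') ↔
    ∃ D : Set X, D = downcl le D ∧ downcl le (post step D) ⊆ D ∧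
      x ∈ D ∧ y ∉ D := by
  constructor
  · intro hnc
    exact ⟨{z | ¬ Coverable step le z y},
      (downcl_setOf_not_coverable hrefl htrans hmono y).symm,
      downcl_post_setOf_not_coverable_subset htrans hmono y, hnc,
      fun hy => hy (Coverable.refl hrefl y)⟩
  · rintro ⟨D, hdc, hinv, hx, hy⟩
    exact not_coverable_of_downcl_post_subset hrefl hdc hinv hx hy
end

section
/- Let (X, →, ≤) be a finitely branching ordered transition system where ≤ is a quasi-ordering with no infinite antichain, satisfying upward transitive monotonicity and downward transitive monotonicity. Then for every x_0 ∈ X, there exists an infinite run x_0 → x_1 → x_2 → ⋯ if, and only if, there exist states y, z ∈ X with x_0 →* y, y →+ z, and (y ≤ z or z ≤ y). -/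
/-! A run that visits infinitely many states meets two comparable ones, since there is no infinite
antichain; a repeated state is comparable with itself. Conversely, if `y →+ z` with `y ≤ z`, upward
monotonicity lifts the path `y →+ z` to a path `z →+ z'` with `z ≤ z'`, and so on: the states
`a` with `a →+ b` for some `b ≥ a` can each reach another such state, and chaining these paths
gives an infinite run. The case `z ≤ y` is the same argument for the reversed order, using
downward monotonicity. -/

open Relation

section TransitionSystem

variable {X : Type*}

def HasInfiniteRun (step : X → X → Prop) (x : X) : Prop :=
  ∃ f : ℕ → X, f 0 = x ∧ ∀ n, step (f n) (f (n + 1))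

section Run

variable {step : X → X → Prop}

theorem hasInfiniteRun_of_forall_mem_exists_step {T : Set X}
    (hT : ∀ a ∈ T, ∃ b ∈ T, step a b) {x : X} (hx : x ∈ T) : HasInfiniteRun step x := by
  choose g hgT hg using hT
  let next : T → T := fun a => ⟨g a a.2, hgT a a.2⟩
  refine ⟨fun n => (next^[n] ⟨x, hx⟩).1, rfl, fun n => ?_⟩
  simp only [Function.iterate_succ_apply']
  exact hg _ _

theorem hasInfiniteRun_of_forall_mem_exists_transGen {S : Set X}
    (hS : ∀ a ∈ S, ∃ b ∈ S, TransGen step a b) {x y : X} (hxy : ReflTransGen step x y)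
    (hy : y ∈ S) : HasInfiniteRun step x := by
  refine hasInfiniteRun_of_forall_mem_exists_step (T := {a | ∃ c ∈ S, ReflTransGen step a c})
    ?_ ⟨y, hy, hxy⟩
  rintro a ⟨c, hcS, hac⟩
  rcases hac.cases_head with rfl | ⟨b, hab, hbc⟩
  · obtain ⟨d, hdS, had⟩ := hS a hcS
    obtain ⟨b, hab, hbd⟩ := TransGen.head'_iff.mp had
    exact ⟨b, ⟨d, hdS, hbd⟩, hab⟩
  · exact ⟨b, ⟨c, hcS, hbc⟩, hab⟩

theorem reflTransGen_of_forall_step_succ {f : ℕ → X} (hf : ∀ n, step (f n) (f (n + 1))) {m n : ℕ}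
    (hmn : m ≤ n) : ReflTransGen step (f m) (f n) :=
  (reflTransGen_of_succ_of_le (fun i j => step (f i) (f j)) (fun i _ => hf i) hmn).lift f
    fun _ _ h => h

theorem transGen_of_forall_step_succ {f : ℕ → X} (hf : ∀ n, step (f n) (f (n + 1))) {m n : ℕ}
    (hmn : m < n) : TransGen step (f m) (f n) :=
  (transGen_of_succ_of_lt (fun i j => step (f i) (f j)) (fun i _ => hf i) hmn).lift f
    fun _ _ h => h

end Run

section Monotone

variable {step le : X → X → Prop}

-- Downward transitive monotonicity is the case `flip le`.
theorem Relation.TransGen.exists_le_transGen_of_le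
    (hmono : ∀ x y x', step x y → le x x' → ∃ y', le y y' ∧ TransGen step x' y')
    {x y x' : X} (hxy : TransGen step x y) (hxx' : le x x') :
    ∃ y', le y y' ∧ TransGen step x' y' := by
  induction hxy with
  | single h => exact hmono _ _ _ h hxx'
  | tail _ hbc ih =>
    obtain ⟨b', hbb', hx'b'⟩ := ih
    obtain ⟨c', hcc', hb'c'⟩ := hmono _ _ _ hbc hbb'
    exact ⟨c', hcc', hx'b'.trans hb'c'⟩

theorem hasInfiniteRun_of_transGen_of_le
    (hmono : ∀ x y x', step x y → le x x' → ∃ y', le y y' ∧ TransGen step x' y')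
    {x y z : X} (hxy : ReflTransGen step x y) (hyz : TransGen step y z) (hle : le y z) :
    HasInfiniteRun step x := by
  refine hasInfiniteRun_of_forall_mem_exists_transGen
    (S := {a | ∃ b, le a b ∧ TransGen step a b}) ?_ hxy ⟨z, hle, hyz⟩
  rintro a ⟨b, hab, habt⟩
  exact ⟨b, habt.exists_le_transGen_of_le hmono hab, habt⟩

end Monotone

theorem exists_lt_comparable_of_finite_antichains {le : X → X → Prop} (hrefl : ∀ x, le x x)
    (hac : ∀ A : Set X, (∀ a ∈ A, ∀ b ∈ A, a ≠ b → ¬ le a b ∧ ¬ le b a) → A.Finite)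
    (f : ℕ → X) : ∃ m n, m < n ∧ (le (f m) (f n) ∨ le (f n) (f m)) := by
  by_contra! hinc
  have hne : ∀ m n, m ≠ n → f m ≠ f n := by
    intro m n hmn heq
    rcases Nat.lt_or_gt_of_ne hmn with h | h
    · exact (hinc m n h).1 (heq ▸ hrefl (f m))
    · exact (hinc n m h).1 (heq ▸ hrefl (f n))
  refine Set.infinite_range_of_injective (fun m n => not_imp_not.mp (hne m n)) (hac _ ?_)
  rintro _ ⟨m, rfl⟩ _ ⟨n, rfl⟩ hfmn
  rcases Nat.lt_or_gt_of_ne (fun h => hfmn (congrArg f h)) with h | h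
  · exact hinc m n h
  · exact (hinc n m h).symm

end TransitionSystem

theorem stmt_9_general {X : Type*} (step le : X → X → Prop)
    (hrefl : ∀ x, le x x)
    (hac : ∀ A : Set X, (∀ a ∈ A, ∀ b ∈ A, a ≠ b → ¬ le a b ∧ ¬ le b a) → A.Finite)
    (hup : ∀ x y x', step x y → le x x' →
      ∃ y', le y y' ∧ Relation.TransGen step x' y')
    (hdown : ∀ x y x', step x y → le x' x →
      ∃ y', le y' y ∧ Relation.TransGen step x' y')
    (x₀ : X) :
    (∃ f : ℕ → X, f 0 = x₀ ∧ ∀ n, step (f n) (f (n + 1))) ↔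
    (∃ y z : X, Relation.ReflTransGen step x₀ y ∧ Relation.TransGen step y z ∧
      (le y z ∨ le z y)) := by
  constructor
  · rintro ⟨f, rfl, hf⟩
    obtain ⟨m, n, hmn, hcomp⟩ := exists_lt_comparable_of_finite_antichains hrefl hac f
    exact ⟨f m, f n, reflTransGen_of_forall_step_succ hf m.zero_le,
      transGen_of_forall_step_succ hf hmn, hcomp⟩
  · rintro ⟨y, z, hxy, hyz, hyz_le | hzy_le⟩
    · exact hasInfiniteRun_of_transGen_of_le hup hxy hyz hyz_le
    · exact hasInfiniteRun_of_transGen_of_le (le := flip le) hdown hxy hyz hzy_le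

/-- For a finitely branching ordered transition system whose
quasi-ordering has no infinite antichain, with upward and downward transitive
monotonicity, there is an infinite run from `x₀` iff some state `y` reachable
from `x₀` can reach (in at least one step) a state `z` comparable with `y`. -/
theorem stmt_9 {X : Type*} (step le : X → X → Prop)
    (hrefl : ∀ x, le x x)
    (htrans : ∀ x y z, le x y → le y z → le x z)
    (hfin : ∀ x : X, {y | step x y}.Finite)
    (hac : ∀ A : Set X, (∀ a ∈ A, ∀ b ∈ A, a ≠ b → ¬ le a b ∧ ¬ le b a) → A.Finite)
    (hup : ∀ x y x', step x y → le x x' →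
      ∃ y', le y y' ∧ Relation.TransGen step x' y')
    (hdown : ∀ x y x', step x y → le x' x →
      ∃ y', le y' y ∧ Relation.TransGen step x' y')
    (x₀ : X) :
    (∃ f : ℕ → X, f 0 = x₀ ∧ ∀ n, step (f n) (f (n + 1))) ↔
    (∃ y z : X, Relation.ReflTransGen step x₀ y ∧ Relation.TransGen step y z ∧
      (le y z ∨ le z y)) :=
  stmt_9_general step le hrefl hac hup hdown x₀
end

section
/- Let (X, →, ≤) be a finitely branching ordered transition system where ≤ is a partial order with no infinite antichain, satisfying upward and downward monotonicity as well as upward and downward strict monotonicity. Then for every x_0 ∈ X, the reachability set Post*({x_0}) is infinite if, and only if, there exist states y, z ∈ X with x_0 →* y, y →+ z, and (y < z or z < y). -/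
/-!
Forward direction: by finite branching, a state with infinitely many successors in `→*` can
always escape any finite set towards a state that still reaches infinitely many states
(Kőnig's lemma), so there is an infinite path through pairwise distinct states; as there is no
infinite antichain, two of them are comparable. Backward direction: strict monotonicity
transports `y →+ z` with `y < z` to a step `z →+ w` with `z < w`, so a finite reachability set
would have no maximal element among the states that can be pumped.
-/

open Function Relation

theorem exists_injective_seq_of_forall_exists_notMem {α : Type*} (P : α → Prop)
    (R : α → α → Prop) {a : α} (ha : P a)
    (h : ∀ a, P a → ∀ s : Finset α, ∃ b ∉ s, R a b ∧ P b) :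
    ∃ f : ℕ → α, f 0 = a ∧ Injective f ∧ ∀ n, R (f n) (f (n + 1)) := by
  classical
  choose g hg_notMem hgR hgP using h
  -- the state carries the current point and the finite set of all points chosen before it
  let F : ℕ → {q : α × Finset α // P q.1} := fun n => Nat.rec ⟨(a, ∅), ha⟩
    (fun _ q => ⟨(g q.1.1 q.2 (insert q.1.1 q.1.2), insert q.1.1 q.1.2), hgP _ _ _⟩) n
  let f : ℕ → α := fun n => (F n).1.1
  let S : ℕ → Finset α := fun n => (F n).1.2
  have hS : ∀ n, S (n + 1) = insert (f n) (S n) := fun _ => rfl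
  have hmem : ∀ m n, m < n → f m ∈ S n := by
    intro m n hmn
    induction hmn with
    | refl => simp [hS]
    | step _ ih => exact hS _ ▸ Finset.mem_insert_of_mem ih
  have hnotMem : ∀ n, f n ∉ S n
    | 0 => Finset.notMem_empty _
    | n + 1 => hg_notMem _ _ _
  refine ⟨f, rfl, fun m n hmn => ?_, fun n => hgR _ _ _⟩
  by_contra hne
  rcases Nat.lt_or_gt_of_ne hne with hlt | hlt
  · exact hnotMem n (hmn ▸ hmem m n hlt)
  · exact hnotMem m (hmn ▸ hmem n m hlt)

section Reachability

variable {X : Type*} {step : X → X → Prop}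

theorem Relation.ReflTransGen.exists_entry_notMem {V : Set X} {x z : X}
    (hxz : ReflTransGen step x z) (hz : z ∉ V) :
    ∃ w ∉ V, (w = x ∨ ∃ v ∈ V, step v w) ∧ ReflTransGen step x w ∧ ReflTransGen step w z := by
  induction hxz with
  | refl => exact ⟨x, hz, Or.inl rfl, .refl, .refl⟩
  | @tail b c hxb hbc ih =>
    by_cases hb : b ∈ V
    · exact ⟨c, hz, Or.inr ⟨b, hb, hbc⟩, hxb.tail hbc, .refl⟩
    · obtain ⟨w, hw, hentry, hxw, hwb⟩ := ih hb
      exact ⟨w, hw, hentry, hxw, hwb.tail hbc⟩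

theorem exists_notMem_reflTransGen_infinite (hfin : ∀ x, {y | step x y}.Finite) {x : X}
    (hx : {z | ReflTransGen step x z}.Infinite) {V : Set X} (hV : V.Finite) :
    ∃ y ∉ V, ReflTransGen step x y ∧ {z | ReflTransGen step y z}.Infinite := by
  set W := {w | w ∉ V ∧ (w = x ∨ ∃ v ∈ V, step v w) ∧ ReflTransGen step x w}
  have hW : W.Finite := by
    refine ((hV.biUnion fun v _ => hfin v).insert x).subset ?_
    rintro w ⟨-, rfl | ⟨v, hv, hvw⟩, -⟩
    · exact Set.mem_insert _ _
    · exact Set.mem_insert_of_mem _ (Set.mem_biUnion hv hvw)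
  have hcover : {z | ReflTransGen step x z} ⊆ V ∪ ⋃ w ∈ W, {z | ReflTransGen step w z} := by
    intro z hz
    by_cases hzV : z ∈ V
    · exact Or.inl hzV
    · obtain ⟨w, hw, hentry, hxw, hwz⟩ := hz.exists_entry_notMem hzV
      exact Or.inr (Set.mem_biUnion ⟨hw, hentry, hxw⟩ hwz)
  by_contra! h
  exact hx ((hV.union (hW.biUnion fun w hw => h w hw.1 hw.2.2)).subset hcover)

theorem exists_injective_transGen_seq (hfin : ∀ x, {y | step x y}.Finite) {x : X}
    (hx : {z | ReflTransGen step x z}.Infinite) :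
    ∃ f : ℕ → X, f 0 = x ∧ Injective f ∧ ∀ n, TransGen step (f n) (f (n + 1)) := by
  obtain ⟨f, hf0, hinj, hf⟩ := exists_injective_seq_of_forall_exists_notMem
    (fun y => {z | ReflTransGen step y z}.Infinite) (ReflTransGen step) hx
    fun _ hy s => exists_notMem_reflTransGen_infinite hfin hy s.finite_toSet
  refine ⟨f, hf0, hinj, fun n => ?_⟩
  exact (reflTransGen_iff_eq_or_transGen.mp (hf n)).resolve_left (hinj.ne n.succ_ne_self)

end Reachability

theorem exists_lt_rel_or_rel_of_injective {α : Type*} {r : α → α → Prop}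
    (hac : ∀ A : Set α, IsAntichain r A → A.Finite) {f : ℕ → α} (hf : Injective f) :
    ∃ i j, i < j ∧ (r (f i) (f j) ∨ r (f j) (f i)) := by
  by_contra! h
  refine Set.infinite_range_of_injective hf (hac _ ?_)
  rintro _ ⟨i, rfl⟩ _ ⟨j, rfl⟩ hne
  rcases Nat.lt_or_gt_of_ne (hf.ne_iff.mp hne) with hij | hij
  · exact (h i j hij).1
  · exact (h j i hij).2

section Pumping

variable {α : Type*} [PartialOrder α] {step : α → α → Prop}
  (hmono : ∀ x y x', step x y → x < x' → ∃ y', y < y' ∧ ReflTransGen step x' y')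
include hmono

theorem exists_lt_of_transGen_of_lt {a b c : α} (hab : TransGen step a b) (hac : a < c) :
    ∃ d, b < d ∧ ReflTransGen step c d := by
  induction hab with
  | single h => exact hmono _ _ _ h hac
  | tail _ h ih =>
    obtain ⟨d, hbd, hcd⟩ := ih
    obtain ⟨e, hde, hce⟩ := hmono _ _ _ h hbd
    exact ⟨e, hde, hcd.trans hce⟩

theorem infinite_reflTransGen_of_transGen_of_lt {x y z : α} (hxy : ReflTransGen step x y)
    (hyz : TransGen step y z) (hlt : y < z) : {w | ReflTransGen step x w}.Infinite := by
  intro hfin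
  set T := {v | ReflTransGen step x v ∧ ∃ w, TransGen step v w ∧ v < w}
  obtain ⟨v, hv⟩ :=
    (hfin.subset fun _ hv => hv.1 : T.Finite).exists_maximal ⟨y, hxy, z, hyz, hlt⟩
  obtain ⟨hxv, w, hvw, hlt⟩ := hv.prop
  obtain ⟨d, hwd, hwd'⟩ := exists_lt_of_transGen_of_lt hmono hvw hlt
  have hw : w ∈ T :=
    ⟨hxv.trans hvw.to_reflTransGen, d,
      (reflTransGen_iff_eq_or_transGen.mp hwd').resolve_left hwd.ne', hwd⟩
  exact hv.not_gt hw hlt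

end Pumping

theorem stmt_10_general {X : Type*} (step le : X → X → Prop)
    (hrefl : ∀ x, le x x)
    (htrans : ∀ x y z, le x y → le y z → le x z)
    (hantisymm : ∀ x y, le x y → le y x → x = y)
    (hfin : ∀ x : X, {y | step x y}.Finite)
    (hac : ∀ A : Set X, (∀ a ∈ A, ∀ b ∈ A, a ≠ b → ¬ le a b ∧ ¬ le b a) → A.Finite)
    (hupstrict : ∀ x y x', step x y → le x x' → x ≠ x' →
      ∃ y', le y y' ∧ y ≠ y' ∧ Relation.ReflTransGen step x' y')
    (hdownstrict : ∀ x y x', step x y → le x' x → x' ≠ x →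
      ∃ y', le y' y ∧ y' ≠ y ∧ Relation.ReflTransGen step x' y')
    (x₀ : X) :
    {z | Relation.ReflTransGen step x₀ z}.Infinite ↔
    (∃ y z : X, Relation.ReflTransGen step x₀ y ∧ Relation.TransGen step y z ∧
      ((le y z ∧ y ≠ z) ∨ (le z y ∧ z ≠ y))) := by
  let _ : PartialOrder X :=
    { le := le, le_refl := hrefl, le_trans := htrans, le_antisymm := hantisymm }
  constructor
  · intro hinf
    obtain ⟨f, rfl, hinj, hf⟩ := exists_injective_transGen_seq hfin hinf
    obtain ⟨i, j, hij, hcomp⟩ := exists_lt_rel_or_rel_of_injective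
      (fun A hA => hac A fun a ha b hb hab => ⟨hA ha hb hab, hA hb ha hab.symm⟩) hinj
    have hne : f i ≠ f j := hinj.ne hij.ne
    refine ⟨f i, f j, Nat.rel_of_forall_rel_succ_of_le (ReflTransGen step)
      (fun n => (hf n).to_reflTransGen) i.zero_le,
      Nat.rel_of_forall_rel_succ_of_lt (TransGen step) hf hij, ?_⟩
    exact hcomp.imp (⟨·, hne⟩) (⟨·, hne.symm⟩)
  · rintro ⟨y, z, hxy, hyz, ⟨hle, hne⟩ | ⟨hle, hne⟩⟩
    · refine infinite_reflTransGen_of_transGen_of_lt (fun x y x' h hlt => ?_) hxy hyz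
        (lt_of_le_of_ne hle hne)
      obtain ⟨y', hle', hne', hreach⟩ := hupstrict x y x' h hlt.le hlt.ne
      exact ⟨y', lt_of_le_of_ne hle' hne', hreach⟩
    · refine infinite_reflTransGen_of_transGen_of_lt (α := Xᵒᵈ) (fun x y x' h hlt => ?_)
        hxy hyz (lt_of_le_of_ne hle hne.symm)
      obtain ⟨y', hle', hne', hreach⟩ := hdownstrict x y x' h hlt.le hlt.ne'
      exact ⟨y', lt_of_le_of_ne hle' hne'.symm, hreach⟩

/-- For a finitely branching ordered transition system whose
partial order has no infinite antichain, with upward and downward (plain and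
strict) monotonicity, the reachability set of `x₀` is infinite iff some state
`y` reachable from `x₀` can reach (in at least one step) a state `z` strictly
comparable with `y`. -/
theorem stmt_10 {X : Type*} (step le : X → X → Prop)
    (hrefl : ∀ x, le x x)
    (htrans : ∀ x y z, le x y → le y z → le x z)
    (hantisymm : ∀ x y, le x y → le y x → x = y)
    (hfin : ∀ x : X, {y | step x y}.Finite)
    (hac : ∀ A : Set X, (∀ a ∈ A, ∀ b ∈ A, a ≠ b → ¬ le a b ∧ ¬ le b a) → A.Finite)
    (hup : ∀ x y x', step x y → le x x' →
      ∃ y', le y y' ∧ Relation.ReflTransGen step x' y')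
    (hdown : ∀ x y x', step x y → le x' x →
      ∃ y', le y' y ∧ Relation.ReflTransGen step x' y')
    (hupstrict : ∀ x y x', step x y → le x x' → x ≠ x' →
      ∃ y', le y y' ∧ y ≠ y' ∧ Relation.ReflTransGen step x' y')
    (hdownstrict : ∀ x y x', step x y → le x' x → x' ≠ x →
      ∃ y', le y' y ∧ y' ≠ y ∧ Relation.ReflTransGen step x' y')
    (x₀ : X) :
    {z | Relation.ReflTransGen step x₀ z}.Infinite ↔
    (∃ y z : X, Relation.ReflTransGen step x₀ y ∧ Relation.TransGen step y z ∧
      ((le y z ∧ y ≠ z) ∨ (le z y ∧ z ≠ y))) :=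
  stmt_10_general step le hrefl htrans hantisymm hfin hac hupstrict hdownstrict x₀
end

section
/- Let (X, →, ≤) be an ordered transition system with downward transitive monotonicity, and suppose there exist states x, y ∈ X with x →+ y and y ≤ x. Then the system does not terminate from x: there exists an infinite run x = x_0 → x_1 → x_2 → ⋯. -/
/-! Call a state `a` *good* if it reaches, in zero or more steps, some state below `x`. The state `x`
is good, and every good state has a good successor: if `a →* b ≤ x` with at least one step, the
first step of that path leads to a good state; if `a ≤ x` itself, monotonicity transfers the cycle
`x →+ y ≤ x` down to a path `a →+ y'` with `y' ≤ y ≤ x`. Choosing good successors forever gives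
an infinite run from `x`. -/

open Relation

section

variable {X : Type*}

def DownwardTransMonotone (step le : X → X → Prop) : Prop :=
  ∀ a b a', step a b → le a' a → ∃ b', le b' b ∧ TransGen step a' b'

theorem DownwardTransMonotone.transGen {step le : X → X → Prop}
    (hdown : DownwardTransMonotone step le) {a b a' : X} (hab : TransGen step a b)
    (ha' : le a' a) : ∃ b', le b' b ∧ TransGen step a' b' := by
  induction hab with
  | single hab => exact hdown _ _ _ hab ha'
  | tail _ hbc ih =>
    obtain ⟨b', hb', hab'⟩ := ih
    obtain ⟨c', hc', hbc'⟩ := hdown _ _ _ hbc hb'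
    exact ⟨c', hc', hab'.trans hbc'⟩

theorem not_acc_of_forall_exists_rel {r : X → X → Prop} {p : X → Prop}
    (h : ∀ a, p a → ∃ b, r b a ∧ p b) {x : X} (hx : p x) : ¬Acc r x := by
  intro hacc
  induction hacc with
  | intro a _ ih =>
    obtain ⟨b, hba, hb⟩ := h a hx
    exact ih b hba hb

theorem exists_run_of_forall_exists_step {step : X → X → Prop} {p : X → Prop}
    (h : ∀ a, p a → ∃ b, step a b ∧ p b) {x : X} (hx : p x) :
    ∃ f : ℕ → X, f 0 = x ∧ ∀ n, step (f n) (f (n + 1)) :=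
  not_acc_iff_exists_descending_chain.mp <| not_acc_of_forall_exists_rel (r := flip step) h hx

theorem DownwardTransMonotone.exists_step_reflTransGen_le {step le : X → X → Prop}
    (hdown : DownwardTransMonotone step le) (htrans : ∀ x y z, le x y → le y z → le x z)
    {x y : X} (hxy : TransGen step x y) (hyx : le y x) {a b : X}
    (hab : ReflTransGen step a b) (hbx : le b x) :
    ∃ m, step a m ∧ ∃ c, ReflTransGen step m c ∧ le c x := by
  rcases reflTransGen_iff_eq_or_transGen.mp hab with rfl | hab
  · obtain ⟨y', hy', hay'⟩ := hdown.transGen hxy hbx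
    obtain ⟨m, ham, hmy'⟩ := TransGen.head'_iff.mp hay'
    exact ⟨m, ham, y', hmy', htrans _ _ _ hy' hyx⟩
  · obtain ⟨m, ham, hmb⟩ := TransGen.head'_iff.mp hab
    exact ⟨m, ham, b, hmb, hbx⟩

end

theorem stmt_11_general {X : Type*} (step le : X → X → Prop)
    (htrans : ∀ x y z, le x y → le y z → le x z)
    (hdown : ∀ a b a', step a b → le a' a →
      ∃ b', le b' b ∧ Relation.TransGen step a' b')
    (x y : X) (hxy : Relation.TransGen step x y) (hyx : le y x) :
    ∃ f : ℕ → X, f 0 = x ∧ ∀ n, step (f n) (f (n + 1)) :=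
  exists_run_of_forall_exists_step (p := fun a => ∃ b, ReflTransGen step a b ∧ le b x)
    (fun _ ⟨_, hab, hbx⟩ =>
      DownwardTransMonotone.exists_step_reflTransGen_le hdown htrans hxy hyx hab hbx)
    ⟨y, hxy.to_reflTransGen, hyx⟩

/-- In an ordered transition system with downward transitive
monotonicity, if `x →+ y` and `y ≤ x`, then there is an infinite run from `x`. -/
theorem stmt_11 {X : Type*} (step le : X → X → Prop)
    (hrefl : ∀ x, le x x)
    (htrans : ∀ x y z, le x y → le y z → le x z)
    (hdown : ∀ a b a', step a b → le a' a →
      ∃ b', le b' b ∧ Relation.TransGen step a' b')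
    (x y : X) (hxy : Relation.TransGen step x y) (hyx : le y x) :
    ∃ f : ℕ → X, f 0 = x ∧ ∀ n, step (f n) (f (n + 1)) :=
  stmt_11_general step le htrans hdown x y hxy hyx
end

section
/- Let (X, →, ≤) be an ordered transition system where ≤ is a partial order, satisfying downward strict monotonicity, and suppose there exist states x, y ∈ X with x →+ y and y < x. Then Post*({x}) is infinite: in fact there exists an infinite strictly descending sequence y_0 > y_1 > y_2 > ⋯ of states all reachable from x. -/
/-!
A pair `(a, b)` with `a →* b` and `b < a` can always be continued: by downward strict
monotonicity, lifted from single steps to runs, the run `a →* b` can be replayed from the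
smaller state `b`, reaching some `c < b` with `b →* c`. Iterating gives a strictly descending
sequence of states reachable from `x`, which is injective in a partial order.
-/

open Relation

theorem exists_chain_seq_of_forall_exists {α : Type*} {R : α → α → Prop}
    (hR : ∀ a b, R a b → ∃ c, R b c) {x y : α} (hxy : R x y) :
    ∃ g : ℕ → α, g 0 = y ∧ ∀ n, R (g n) (g (n + 1)) := by
  let T := {b : α // ∃ a, R a b}
  let next : T → T := fun b =>
    ⟨(hR _ _ b.2.choose_spec).choose, b.1, (hR _ _ b.2.choose_spec).choose_spec⟩
  refine ⟨fun n => (next^[n] ⟨y, x, hxy⟩).1, rfl, fun n => ?_⟩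
  simp only [Function.iterate_succ_apply']
  exact (hR _ _ (next^[n] ⟨y, x, hxy⟩).2.choose_spec).choose_spec

section DownwardStrictMono

variable {α : Type*}

def DownwardStrictMono [LT α] (r : α → α → Prop) : Prop :=
  ∀ ⦃a b a'⦄, r a b → a' < a → ∃ b' < b, ReflTransGen r a' b'

theorem DownwardStrictMono.reflTransGen [LT α] {r : α → α → Prop} (hr : DownwardStrictMono r)
    {a b : α} (hab : ReflTransGen r a b) {a' : α} (ha' : a' < a) :
    ∃ b' < b, ReflTransGen r a' b' := by
  induction hab using ReflTransGen.head_induction_on generalizing a' with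
  | refl => exact ⟨a', ha', .refl⟩
  | head hac _ ih =>
    obtain ⟨c', hc', hac'⟩ := hr hac ha'
    obtain ⟨b', hb', hcb'⟩ := ih hc'
    exact ⟨b', hb', hac'.trans hcb'⟩

theorem DownwardStrictMono.exists_strictAnti_seq_reachable [PartialOrder α]
    {r : α → α → Prop} (hr : DownwardStrictMono r) {x y : α} (hxy : ReflTransGen r x y)
    (hyx : y < x) :
    ∃ g : ℕ → α, (∀ n, ReflTransGen r x (g n)) ∧ StrictAnti g := by
  have hcont : ∀ a b, ReflTransGen r a b ∧ b < a → ∃ c, ReflTransGen r b c ∧ c < b := by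
    rintro a b ⟨hab, hba⟩
    obtain ⟨c, hcb, hbc⟩ := hr.reflTransGen hab hba
    exact ⟨c, hbc, hcb⟩
  obtain ⟨g, rfl, hg⟩ := exists_chain_seq_of_forall_exists hcont ⟨hxy, hyx⟩
  refine ⟨g, fun n => ?_, strictAnti_nat_of_succ_lt fun n => (hg n).2⟩
  induction n with
  | zero => exact hxy
  | succ n ih => exact ih.trans (hg n).1

theorem DownwardStrictMono.infinite_reachable [PartialOrder α] {r : α → α → Prop}
    (hr : DownwardStrictMono r) {x y : α} (hxy : ReflTransGen r x y) (hyx : y < x) :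
    {z | ReflTransGen r x z}.Infinite := by
  obtain ⟨g, hreach, hg⟩ := hr.exists_strictAnti_seq_reachable hxy hyx
  exact Set.infinite_of_injective_forall_mem hg.injective hreach

end DownwardStrictMono

/-- In a partially ordered transition system with downward
strict monotonicity, if `x →+ y` and `y < x`, then the reachability set of
`x` is infinite; in fact there is an infinite strictly descending sequence of
states reachable from `x`. -/
theorem stmt_12 {X : Type*} (step le : X → X → Prop)
    (hrefl : ∀ x, le x x)
    (htrans : ∀ x y z, le x y → le y z → le x z)
    (hantisymm : ∀ x y, le x y → le y x → x = y)
    (hdownstrict : ∀ a b a', step a b → le a' a → a' ≠ a →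
      ∃ b', le b' b ∧ b' ≠ b ∧ Relation.ReflTransGen step a' b')
    (x y : X) (hxy : Relation.TransGen step x y)
    (hlt : le y x ∧ y ≠ x) :
    {z | Relation.ReflTransGen step x z}.Infinite ∧
    ∃ g : ℕ → X, (∀ n, Relation.ReflTransGen step x (g n)) ∧
      (∀ n, le (g (n + 1)) (g n) ∧ g (n + 1) ≠ g n) := by
  let _ : PartialOrder X :=
    { le := le, le_refl := hrefl, le_trans := htrans, le_antisymm := hantisymm }
  have hr : DownwardStrictMono step := fun a b a' hab ha' => by
    obtain ⟨b', hb'b, hne, hrun⟩ := hdownstrict a b a' hab ha'.le ha'.ne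
    exact ⟨b', lt_of_le_of_ne hb'b hne, hrun⟩
  have hyx : y < x := lt_of_le_of_ne hlt.1 hlt.2
  obtain ⟨g, hreach, hg⟩ := hr.exists_strictAnti_seq_reachable hxy.to_reflTransGen hyx
  exact ⟨hr.infinite_reachable hxy.to_reflTransGen hyx, g, hreach,
    fun n => ⟨(hg n.lt_succ_self).le, (hg n.lt_succ_self).ne⟩⟩
end
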